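/- arXiv:1608.02638 — 3 statements merged into one kernel-verified Lean document; each statement's English description precedes it below -/
import Mathlib

section
/- Let f : ℕ → ℕ satisfy lim_{m→∞} f(m)/m = 1, and let (a_n) be a sequence of positive reals with a_n^{1/n} bounded above, such that a_n · a_m ≤ a_{n+f(m)} for all sufficiently large n and m. Then lim_{n→∞} a_n^{1/n} exists and equals limsup_{n→∞} a_n^{1/n}, which is finite. -/
/-!
Write `b n = a n ^ (1 / n)`; the upper half of the convergence is just the definition of
`L = limsup b`. For the lower half fix `c < L`. Since `b m > q > c` for infinitely many `m` and
`m / f m → 1`, some large `m` has `y := a m ^ (1 / f m) > c`. Iterating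
`a n · a m ≤ a (n + f m)` gives `a n ≥ C yⁿ` for all large `n`, with `C > 0` fixed by the finitely
many initial terms, so `b n ≥ C ^ (1 / n) y → y > c`.
-/

open Filter Topology

section

variable {a : ℕ → ℝ}

theorem exists_pos_mul_pow_le_of_mul_pow_le (hpos : ∀ n, 0 < a n) {y : ℝ} (hy : 0 ≤ y)
    {N p : ℕ} (hp : 0 < p) (h : ∀ n ≥ N, a n * y ^ p ≤ a (n + p)) :
    ∃ C > 0, ∀ n ≥ N, C * y ^ n ≤ a n := by
  have hsmall : ∀ᶠ C in 𝓝[>] (0 : ℝ), ∀ n ∈ {n | n < N + p}, C * y ^ n ≤ a n := by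
    refine (eventually_all_finite (Set.finite_lt_nat _)).2 fun n _ => ?_
    have hlim : Tendsto (fun C : ℝ => C * y ^ n) (𝓝[>] 0) (𝓝 0) := by
      simpa using ((tendsto_id (x := 𝓝 (0 : ℝ))).mul_const (y ^ n)).mono_left nhdsWithin_le_nhds
    exact (hlim.eventually (gt_mem_nhds (hpos n))).mono fun _ => le_of_lt
  obtain ⟨C, hCle, hC⟩ := (hsmall.and self_mem_nhdsWithin).exists
  refine ⟨C, hC, fun n => ?_⟩
  induction n using Nat.strong_induction_on with
  | _ n ih =>
    intro hn
    rcases lt_or_ge n (N + p) with hlt | hge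
    · exact hCle n hlt
    obtain ⟨k, rfl⟩ : ∃ k, n = k + p := ⟨n - p, by omega⟩
    calc C * y ^ (k + p) = C * y ^ k * y ^ p := by ring
      _ ≤ a k * y ^ p := by gcongr; exact ih k (by omega) (by omega)
      _ ≤ a (k + p) := h k (by omega)

theorem eventually_lt_rpow_inv_of_mul_pow_le {C y : ℝ} (hC : 0 < C) (hy : 0 ≤ y)
    (h : ∀ᶠ n in atTop, C * y ^ n ≤ a n) {c : ℝ} (hc : c < y) :
    ∀ᶠ n in atTop, c < a n ^ (n : ℝ)⁻¹ := by
  have hlim : Tendsto (fun n : ℕ => C ^ (n : ℝ)⁻¹ * y) atTop (𝓝 y) := by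
    simpa using ((Real.continuousAt_const_rpow hC.ne').tendsto.comp
      tendsto_inv_atTop_nhds_zero_nat).mul_const y
  filter_upwards [hlim.eventually (lt_mem_nhds hc), h, eventually_gt_atTop 0] with n hcn hn hn0
  calc c < C ^ (n : ℝ)⁻¹ * y := hcn
    _ = (C * y ^ n) ^ (n : ℝ)⁻¹ := by
      rw [Real.mul_rpow hC.le (pow_nonneg hy _), Real.pow_rpow_inv_natCast hy hn0.ne']
    _ ≤ a n ^ (n : ℝ)⁻¹ := Real.rpow_le_rpow (by positivity) hn (by positivity)

theorem frequently_lt_rpow_inv_of_lt_limsup (ha : ∀ n, 0 ≤ a n) {g : ℕ → ℝ}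
    (hg : Tendsto (fun m : ℕ => g m / m) atTop (𝓝 1)) {c : ℝ} (hc : 0 < c)
    (hcL : c < limsup (fun n : ℕ => a n ^ (n : ℝ)⁻¹) atTop) :
    ∃ᶠ m in atTop, 0 < g m ∧ c < a m ^ (g m)⁻¹ := by
  obtain ⟨q, hcq, hqL⟩ := exists_between hcL
  have hfreq : ∃ᶠ m in atTop, q < a m ^ (m : ℝ)⁻¹ :=
    frequently_lt_of_lt_limsup
      (isCoboundedUnder_le_of_le atTop fun n => Real.rpow_nonneg (ha n) _) hqL
  have hexp : Tendsto (fun m : ℕ => (m : ℝ) / g m) atTop (𝓝 1) := by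
    simpa using hg.inv₀ one_ne_zero
  have hq : ∀ᶠ m : ℕ in atTop, c < q ^ ((m : ℝ) / g m) := by
    have hcont : Tendsto (fun t : ℝ => q ^ t) (𝓝 1) (𝓝 q) := by
      simpa using (Real.continuousAt_const_rpow (b := 1) (hc.trans hcq).ne').tendsto
    exact hexp.eventually (hcont.eventually (lt_mem_nhds hcq))
  refine (hfreq.and_eventually
    (hq.and ((hg.eventually (lt_mem_nhds one_pos)).and (eventually_gt_atTop 0)))).mono ?_
  rintro m ⟨hqm, hcqm, hgm, hm⟩
  have hm : (0 : ℝ) < m := Nat.cast_pos.2 hm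
  have hgm : 0 < g m := (div_pos_iff_of_pos_right hm).1 hgm
  refine ⟨hgm, hcqm.trans ?_⟩
  calc q ^ ((m : ℝ) / g m) < (a m ^ (m : ℝ)⁻¹) ^ ((m : ℝ) / g m) :=
        Real.rpow_lt_rpow (hc.trans hcq).le hqm (by positivity)
    _ = a m ^ (g m)⁻¹ := by
      rw [← Real.rpow_mul (ha m)]
      field_simp

end

/-- Wilker–Whittington strengthening of Fekete's lemma: if `f(m)/m → 1`, the
positive sequence `(a n)` satisfies `a n · a m ≤ a (n + f m)` for all
sufficiently large `n, m`, and `a n ^ (1/n)` is bounded above, then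
`a n ^ (1/n)` converges, and its limit is its (finite) limit superior. -/
theorem wilker_whittington (f : ℕ → ℕ) (a : ℕ → ℝ)
    (hf : Tendsto (fun m : ℕ => (f m : ℝ) / (m : ℝ)) atTop (nhds 1))
    (hpos : ∀ n, 0 < a n)
    (hsuper : ∃ N : ℕ, ∀ n ≥ N, ∀ m ≥ N, a n * a m ≤ a (n + f m))
    (B : ℝ) (hB : ∀ n : ℕ, a n ^ ((n : ℝ)⁻¹) ≤ B) :
    Tendsto (fun n : ℕ => a n ^ ((n : ℝ)⁻¹)) atTop
      (nhds (limsup (fun n : ℕ => a n ^ ((n : ℝ)⁻¹)) atTop)) := by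
  obtain ⟨N, hN⟩ := hsuper
  refine tendsto_order.2 ⟨fun c hc => ?_, fun c hc =>
    eventually_lt_of_limsup_lt hc ⟨B, eventually_map.2 (.of_forall hB)⟩⟩
  rcases le_or_gt c 0 with hc0 | hc0
  · exact .of_forall fun n => hc0.trans_lt (Real.rpow_pos_of_pos (hpos n) _)
  obtain ⟨m, ⟨hfm, hcy⟩, hmN⟩ :=
    ((frequently_lt_rpow_inv_of_lt_limsup (fun n => (hpos n).le) hf hc0 hc).and_eventually
      (eventually_ge_atTop N)).exists
  have hfm : 0 < f m := Nat.cast_pos.1 hfm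
  have hy : (a m ^ (f m : ℝ)⁻¹) ^ f m = a m := Real.rpow_inv_natCast_pow (hpos m).le hfm.ne'
  obtain ⟨C, hC, hCy⟩ := exists_pos_mul_pow_le_of_mul_pow_le hpos
    (Real.rpow_nonneg (hpos m).le _) hfm fun n hn => hy ▸ hN n hn m hmN
  exact eventually_lt_rpow_inv_of_mul_pow_le hC (Real.rpow_nonneg (hpos m).le _)
    (eventually_atTop.2 ⟨N, hCy⟩) hcy
end

section
/- Under the hypotheses of the Wilker–Whittington lemma (a_n·a_m ≤ a_{n+f(m)} for large n,m, with lim f(m)/m = 1 and a_n^{1/n} bounded), letting λ = lim_{n→∞} a_n^{1/n}, one has a_n ≤ λ^{f(n)} for all n in the range where the super-multiplicativity holds. -/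
open Filter

/-- Under the hypotheses of the Wilker–Whittington lemma, with
`λ = lim aₙ^(1/n)`, one has `aₙ ≤ λ^(f n)` for all `n` in the range where the
super-multiplicativity holds. -/
theorem wilker_whittington_bound (f : ℕ → ℕ) (a : ℕ → ℝ) (N : ℕ) (lam : ℝ)
    (hf : Tendsto (fun m : ℕ => (f m : ℝ) / (m : ℝ)) atTop (nhds 1))
    (hpos : ∀ n, 0 < a n)
    (hsuper : ∀ n ≥ N, ∀ m ≥ N, a n * a m ≤ a (n + f m))
    (B : ℝ) (hB : ∀ n : ℕ, a n ^ ((n : ℝ)⁻¹) ≤ B)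
    (hlam : Tendsto (fun n : ℕ => a n ^ ((n : ℝ)⁻¹)) atTop (nhds lam)) :
    ∀ n ≥ N, a n ≤ lam ^ (f n) := by
  intro n hn
  rcases Nat.eq_zero_or_pos (f n) with hfn | hfn
  · have h := hsuper n hn n hn
    rw [hfn, Nat.add_zero] at h
    have := hpos n
    simp only [hfn, pow_zero]
    nlinarith
  · have hfn' : (0:ℝ) < f n := by exact_mod_cast hfn
    set M : ℕ → ℕ := fun k => N + k * f n with hM
    have key : ∀ k, a N * a n ^ k ≤ a (M k) := by
      intro k; induction k with
      | zero => simp [hM]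
      | succ k ih =>
        have h1 : a (M k) * a n ≤ a (M k + f n) :=
          hsuper (M k) (by simp [hM]) n hn
        calc a N * a n ^ (k+1) = (a N * a n ^ k) * a n := by ring
        _ ≤ a (M k) * a n := mul_le_mul_of_nonneg_right ih (hpos n).le
        _ ≤ a (M k + f n) := h1
        _ = a (M (k+1)) := by simp only [hM]; ring_nf
    have hkM : ∀ k, k ≤ M k := by
      intro k
      have := Nat.le_mul_of_pos_right k hfn
      simp only [hM]; omega
    have htop : Tendsto M atTop atTop :=
      tendsto_atTop_mono hkM tendsto_id
    set c : ℕ → ℝ := fun k => a (M k) ^ ((M k : ℝ)⁻¹) with hc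
    have hctend : Tendsto c atTop (nhds lam) := hlam.comp htop
    have hcnn : ∀ k, 0 ≤ c k := fun k => Real.rpow_nonneg (hpos _).le _
    set s : ℕ → ℝ := fun k => c k ^ ((M k : ℝ) * (k:ℝ)⁻¹) * (a N) ^ (-(k:ℝ)⁻¹) with hs
    -- eventual bound
    have hbound : ∀ᶠ k in atTop, a n ≤ s k := by
      filter_upwards [eventually_ge_atTop 1] with k hk
      have hk0 : (k:ℕ) ≠ 0 := by omega
      have hMk0 : (M k : ℕ) ≠ 0 := by have := hkM k; omega
      have hrecon : a (M k) = c k ^ ((M k : ℕ) : ℝ) := by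
        rw [hc, Real.rpow_natCast]
        exact (Real.rpow_inv_natCast_pow (hpos _).le hMk0).symm
      have h1 : a n ^ k ≤ a (M k) / a N := by
        rw [le_div_iff₀ (hpos N)]
        calc a n ^ k * a N = a N * a n ^ k := by ring
        _ ≤ a (M k) := key k
      have h2 : a n = (a n ^ k) ^ ((k:ℝ)⁻¹) :=
        (Real.pow_rpow_inv_natCast (hpos n).le hk0).symm
      calc a n = (a n ^ k) ^ ((k:ℝ)⁻¹) := h2
        _ ≤ (a (M k) / a N) ^ ((k:ℝ)⁻¹) :=
          Real.rpow_le_rpow (pow_nonneg (hpos n).le _) h1 (by positivity)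
        _ = s k := by
          simp only [hs]
          rw [hrecon, Real.div_rpow (Real.rpow_nonneg (hcnn k) _) (hpos N).le,
            ← Real.rpow_mul (hcnn k), Real.rpow_neg (hpos N).le, div_eq_mul_inv]
    -- limit of s
    have hexp : Tendsto (fun k : ℕ => (M k : ℝ) * (k:ℝ)⁻¹) atTop (nhds (f n : ℝ)) := by
      have h0 : Tendsto (fun k : ℕ => (k:ℝ)⁻¹) atTop (nhds 0) :=
        (tendsto_inv_atTop_zero (𝕜 := ℝ)).comp (tendsto_natCast_atTop_atTop (R := ℝ))
      have hbase : Tendsto (fun k : ℕ => (N:ℝ) * (k:ℝ)⁻¹ + (f n : ℝ)) atTop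
          (nhds ((N:ℝ) * 0 + (f n : ℝ))) := (h0.const_mul (N:ℝ)).add tendsto_const_nhds
      rw [mul_zero, zero_add] at hbase
      refine hbase.congr' ?_
      filter_upwards [eventually_ge_atTop 1] with k hk
      have hk0 : (k:ℝ) ≠ 0 := Nat.cast_ne_zero.mpr (by omega)
      show (N:ℝ) * (k:ℝ)⁻¹ + (f n : ℝ) = ((N + k * f n : ℕ) : ℝ) * (k:ℝ)⁻¹
      push_cast
      field_simp
    have hinv : Tendsto (fun k : ℕ => -((k:ℝ)⁻¹)) atTop (nhds 0) := by
      simpa using ((tendsto_inv_atTop_zero (𝕜 := ℝ)).comp (tendsto_natCast_atTop_atTop (R := ℝ))).neg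
    have hsN : Tendsto (fun k : ℕ => (a N) ^ (-(k:ℝ)⁻¹)) atTop (nhds 1) := by
      have := Filter.Tendsto.rpow (tendsto_const_nhds (x := a N)) hinv (Or.inl (hpos N).ne')
      simpa using this
    have hstend : Tendsto s atTop (nhds (lam ^ ((f n : ℕ) : ℝ) * 1)) :=
      (Filter.Tendsto.rpow hctend hexp (Or.inr hfn')).mul hsN
    rw [mul_one, Real.rpow_natCast] at hstend
    exact ge_of_tendsto hstend hbound
end

section
/- Let F(z) = z + z^q with q ≥ 2 an integer, and let H(w) = ∑ h_n w^n be a power series with nonnegative coefficients and 0 < r(H) < ∞. For a positive integer k define G(z) = ∑_n h_n z^n (1 + z^{q−1})^{⌊n/k⌋}. Then r(H)^k = r(G)^{k−1}·F(r(G)) = r(G)^k·(1 + r(G)^{q−1}). -/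
/-!
Expanding `(1 + x^(q-1))^⌊n/k⌋` binomially and regrouping nonnegative terms, `G` converges at
`x ≥ 0` exactly when `∑ hₙ xⁿ b^⌊n/k⌋` does, where `b = 1 + x^(q-1)`. As `b^⌊n/k⌋` lies between
`b^(n/k) / b` and `b^(n/k)`, this happens exactly when `H` converges at `ψ x = x b^(1/k)`.
Hence the continuous map `ψ` carries `r(G)` to `r(H)`, and `ψ(r(G))^k = r(G)^k (1 + r(G)^(q-1))`.
-/

/-- `r` is the radius of convergence of the power series with coefficients
`a`: the series converges absolutely strictly inside radius `r` and diverges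
strictly outside. -/
def IsRadius (a : ℕ → ℝ) (r : ℝ) : Prop :=
  (∀ x : ℝ, |x| < r → Summable (fun n => a n * x ^ n)) ∧
  (∀ x : ℝ, r < |x| → ¬ Summable (fun n => a n * x ^ n))

/-- The coefficient of `z^N` in `G(z) = ∑_n h_n z^n (1 + z^(q-1))^⌊n/k⌋`. -/
noncomputable def Gcoeff (h : ℕ → ℝ) (q k : ℕ) (N : ℕ) : ℝ :=
  ∑ n ∈ Finset.range (N + 1), ∑ j ∈ Finset.range (n / k + 1),
    if n + j * (q - 1) = N then h n * (Nat.choose (n / k) j : ℝ) else 0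

open Filter Topology

lemma summable_iff_tsum_ofReal_ne_top {α : Type*} {f : α → ℝ} (hf : ∀ i, 0 ≤ f i) :
    Summable f ↔ ∑' i, ENNReal.ofReal (f i) ≠ ⊤ :=
  ⟨Summable.tsum_ofReal_ne_top, fun h => by
    simpa only [ENNReal.toReal_ofReal (hf _)] using ENNReal.summable_toReal h⟩

lemma summable_mul_zero_pow (a : ℕ → ℝ) : Summable fun n => a n * 0 ^ n :=
  summable_of_ne_finset_zero (s := {0}) fun n hn => by
    rw [zero_pow (Finset.notMem_singleton.mp hn), mul_zero]

section IsRadius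

variable {a b : ℕ → ℝ} {r s : ℝ}

lemma IsRadius.abs_le_of_summable (ha : IsRadius a r) {x : ℝ}
    (hx : Summable fun n => a n * x ^ n) : |x| ≤ r :=
  not_lt.mp fun hlt => ha.2 x hlt hx

lemma IsRadius.nonneg (ha : IsRadius a r) : 0 ≤ r := by
  simpa using ha.abs_le_of_summable (summable_mul_zero_pow a)

lemma IsRadius.apply_eq_of_summable_iff (ha : IsRadius a r) (hb : IsRadius b s) {f : ℝ → ℝ}
    (hf : Continuous f) (hf_nonneg : ∀ x, 0 ≤ x → 0 ≤ f x)
    (hab : ∀ x, 0 ≤ x →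
      (Summable (fun n => a n * x ^ n) ↔ Summable (fun n => b n * f x ^ n))) :
    f r = s := by
  have hr := ha.nonneg
  refine le_antisymm (not_lt.mp fun hlt => ?_) (not_lt.mp fun hlt => ?_)
  · obtain ⟨x, hx, hfx, hax⟩ : ∃ x, 0 ≤ x ∧ s < f x ∧ Summable fun n => a n * x ^ n := by
      rcases hr.eq_or_lt with rfl | hr
      · exact ⟨0, le_rfl, hlt, summable_mul_zero_pow a⟩
      have hnear : ∀ᶠ x in 𝓝[<] r, (s < f x ∧ 0 < x) ∧ x < r :=
        ((hf.tendsto r |>.eventually (lt_mem_nhds hlt)).and (lt_mem_nhds hr)).filter_mono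
          nhdsWithin_le_nhds |>.and self_mem_nhdsWithin
      obtain ⟨x, ⟨hfx, hx⟩, hxr⟩ := hnear.exists
      exact ⟨x, hx.le, hfx, ha.1 x (by rwa [abs_of_pos hx])⟩
    have := hb.abs_le_of_summable ((hab x hx).mp hax)
    linarith [le_abs_self (f x)]
  · have hnear : ∀ᶠ x in 𝓝[>] r, f x < s ∧ r < x :=
      (hf.tendsto r |>.eventually (gt_mem_nhds hlt)).filter_mono nhdsWithin_le_nhds
        |>.and self_mem_nhdsWithin
    obtain ⟨x, hfx, hrx⟩ := hnear.exists
    have hx : 0 ≤ x := hr.trans hrx.le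
    have hbx := hb.1 (f x) (by rwa [abs_of_nonneg (hf_nonneg x hx)])
    have := ha.abs_le_of_summable ((hab x hx).mpr hbx)
    linarith [le_abs_self x]

end IsRadius

lemma summable_mul_pow_pow_div_iff {c : ℕ → ℝ} (hc : ∀ n, 0 ≤ c n) {β : ℝ} (hβ : 1 ≤ β)
    {k : ℕ} (hk : 0 < k) :
    Summable (fun n => c n * (β ^ k) ^ (n / k)) ↔ Summable (fun n => c n * β ^ n) := by
  have hβ0 : 0 ≤ β := zero_le_one.trans hβ
  simp_rw [← pow_mul']
  constructor
  · intro hs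
    refine Summable.of_nonneg_of_le (fun n => mul_nonneg (hc n) (pow_nonneg hβ0 n))
      (fun n => ?_) (hs.mul_left (β ^ k))
    calc c n * β ^ n ≤ c n * β ^ (n / k * k + k) :=
          mul_le_mul_of_nonneg_left (pow_le_pow_right₀ hβ (Nat.lt_div_mul_add hk).le) (hc n)
      _ = β ^ k * (c n * β ^ (n / k * k)) := by ring
  · exact Summable.of_nonneg_of_le (fun n => mul_nonneg (hc n) (pow_nonneg hβ0 _))
      fun n => mul_le_mul_of_nonneg_left (pow_le_pow_right₀ hβ (Nat.div_mul_le_self n k)) (hc n)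

lemma sum_range_choose_mul_pow_add_mul (c x : ℝ) (m n p : ℕ) :
    ∑ j ∈ Finset.range (m + 1), c * m.choose j * x ^ (n + j * p) = c * x ^ n * (1 + x ^ p) ^ m := by
  rw [add_comm 1, add_pow, Finset.mul_sum]
  refine Finset.sum_congr rfl fun j _ => ?_
  rw [pow_add, pow_mul, one_pow]
  ring

lemma tsum_ofReal_mul_choose_mul_pow {c x : ℝ} (hc : 0 ≤ c) (hx : 0 ≤ x) (m n p : ℕ) :
    ∑' j, ENNReal.ofReal (c * m.choose j * x ^ (n + j * p)) =
      ENNReal.ofReal (c * x ^ n * (1 + x ^ p) ^ m) := by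
  rw [← sum_range_choose_mul_pow_add_mul, ENNReal.ofReal_sum_of_nonneg fun j _ => by positivity]
  refine tsum_eq_sum fun j hj => ?_
  rw [Nat.choose_eq_zero_of_lt (by simpa using hj)]
  simp

section Gcoeff

variable {h : ℕ → ℝ} (q k : ℕ)

lemma Gcoeff_nonneg (hnonneg : ∀ n, 0 ≤ h n) (N : ℕ) : 0 ≤ Gcoeff h q k N :=
  Finset.sum_nonneg fun n _ => Finset.sum_nonneg fun j _ => by
    split_ifs
    exacts [mul_nonneg (hnonneg n) (Nat.cast_nonneg _), le_rfl]

lemma ofReal_Gcoeff_mul_pow (hnonneg : ∀ n, 0 ≤ h n) {x : ℝ} (hx : 0 ≤ x) (N : ℕ) :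
    ENNReal.ofReal (Gcoeff h q k N * x ^ N) = ∑' n, ∑' j, if n + j * (q - 1) = N then
      ENNReal.ofReal (h n * (n / k).choose j * x ^ (n + j * (q - 1))) else 0 := by
  have hG : Gcoeff h q k N * x ^ N = ∑ n ∈ Finset.range (N + 1), ∑ j ∈ Finset.range (n / k + 1),
      if n + j * (q - 1) = N then h n * (n / k).choose j * x ^ (n + j * (q - 1)) else 0 := by
    simp only [Gcoeff, Finset.sum_mul, ite_mul, zero_mul]
    refine Finset.sum_congr rfl fun n _ => Finset.sum_congr rfl fun j _ => ?_
    split_ifs with hN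
    · rw [hN]
    · rfl
  have hterm_nonneg : ∀ n j, 0 ≤ if n + j * (q - 1) = N then
      h n * (n / k).choose j * x ^ (n + j * (q - 1)) else 0 := fun n j => by
    have := hnonneg n
    split_ifs <;> positivity
  rw [hG, ENNReal.ofReal_sum_of_nonneg fun n _ => Finset.sum_nonneg fun j _ => hterm_nonneg n j,
    tsum_eq_sum (s := Finset.range (N + 1))]
  · refine Finset.sum_congr rfl fun n _ => ?_
    rw [ENNReal.ofReal_sum_of_nonneg fun j _ => hterm_nonneg n j,
      tsum_eq_sum (s := Finset.range (n / k + 1))]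
    · simp only [apply_ite ENNReal.ofReal, ENNReal.ofReal_zero]
    · intro j hj
      rw [Nat.choose_eq_zero_of_lt (by simpa using hj)]
      simp
  · intro n hn
    refine ENNReal.tsum_eq_zero.mpr fun j => if_neg ?_
    simp only [Finset.mem_range, not_lt] at hn
    omega

lemma tsum_ofReal_Gcoeff_mul_pow (hnonneg : ∀ n, 0 ≤ h n) {x : ℝ} (hx : 0 ≤ x) :
    ∑' N, ENNReal.ofReal (Gcoeff h q k N * x ^ N) =
      ∑' n, ENNReal.ofReal (h n * x ^ n * (1 + x ^ (q - 1)) ^ (n / k)) := by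
  simp_rw [ofReal_Gcoeff_mul_pow q k hnonneg hx]
  rw [ENNReal.tsum_comm]
  refine tsum_congr fun n => ?_
  rw [ENNReal.tsum_comm]
  simp only [tsum_ite_eq']
  exact tsum_ofReal_mul_choose_mul_pow (hnonneg n) hx _ _ _

lemma summable_Gcoeff_mul_pow_iff (hnonneg : ∀ n, 0 ≤ h n) {k : ℕ} (hk : 0 < k) {x : ℝ}
    (hx : 0 ≤ x) : Summable (fun N => Gcoeff h q k N * x ^ N) ↔
      Summable (fun n => h n * (x * (1 + x ^ (q - 1)) ^ (k⁻¹ : ℝ)) ^ n) := by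
  have hb : 1 ≤ 1 + x ^ (q - 1) := le_add_of_nonneg_right (pow_nonneg hx _)
  have hβ : 1 ≤ (1 + x ^ (q - 1)) ^ (k⁻¹ : ℝ) := Real.one_le_rpow hb (by positivity)
  rw [summable_iff_tsum_ofReal_ne_top fun N => mul_nonneg (Gcoeff_nonneg q k hnonneg N)
      (pow_nonneg hx N), tsum_ofReal_Gcoeff_mul_pow q k hnonneg hx,
    ← summable_iff_tsum_ofReal_ne_top fun n => by have := hnonneg n; positivity]
  conv_lhs => rw [← Real.rpow_inv_natCast_pow (zero_le_one.trans hb) hk.ne']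
  simp_rw [mul_pow, ← mul_assoc]
  exact summable_mul_pow_pow_div_iff (fun n => mul_nonneg (hnonneg n) (pow_nonneg hx n)) hβ hk

end Gcoeff

theorem bender_gao_richmond_lemma3_general (h : ℕ → ℝ) (q k : ℕ) (rH rG : ℝ)
    (hq : 2 ≤ q) (hk : 1 ≤ k)
    (hnonneg : ∀ n, 0 ≤ h n)
    (hrH : IsRadius h rH)
    (hrG : IsRadius (Gcoeff h q k) rG) :
    rH ^ k = rG ^ (k - 1) * (rG + rG ^ q) ∧
    rH ^ k = rG ^ k * (1 + rG ^ (q - 1)) := by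
  have hψ : rG * (1 + rG ^ (q - 1)) ^ (k⁻¹ : ℝ) = rH :=
    hrG.apply_eq_of_summable_iff hrH (by fun_prop (disch := positivity)) (fun x hx => by positivity)
      fun x hx => summable_Gcoeff_mul_pow_iff q hnonneg hk hx
  have hrHk : rH ^ k = rG ^ k * (1 + rG ^ (q - 1)) := by
    rw [← hψ, mul_pow, Real.rpow_inv_natCast_pow (by positivity [hrG.nonneg]) (by omega)]
  refine ⟨?_, hrHk⟩
  have hpow : ∀ m, 1 ≤ m → rG ^ m = rG ^ (m - 1) * rG := fun m hm => by
    rw [← pow_succ, Nat.sub_add_cancel hm]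
  rw [hrHk, hpow k hk, hpow q (by omega)]
  ring

/-- Lemma 3 of Bender, Gao and Richmond: with `F(z) = z + z^q` (`q ≥ 2`),
`H` a power series with nonnegative coefficients and `0 < r(H) < ∞`, and
`G(z) = ∑_n h_n z^n (1 + z^(q-1))^⌊n/k⌋`, one has
`r(H)^k = r(G)^(k-1)·F(r(G)) = r(G)^k·(1 + r(G)^(q-1))`. -/
theorem bender_gao_richmond_lemma3 (h : ℕ → ℝ) (q k : ℕ) (rH rG : ℝ)
    (hq : 2 ≤ q) (hk : 1 ≤ k)
    (hnonneg : ∀ n, 0 ≤ h n)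
    (hrH : IsRadius h rH) (hrHpos : 0 < rH)
    (hrG : IsRadius (Gcoeff h q k) rG) :
    rH ^ k = rG ^ (k - 1) * (rG + rG ^ q) ∧
    rH ^ k = rG ^ k * (1 + rG ^ (q - 1)) :=
  bender_gao_richmond_lemma3_general h q k rH rG hq hk hnonneg hrH hrG
end
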